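/- Let R > 0, let f : [0,R) → ℝ be continuously differentiable with f(0) = 0, f'(0) = −1, and f' strictly increasing on [0,R), let ν := sup{t ∈ [0,R) : f'(t) < 0} and n_f(t) := t − f(t)/f'(t), let K ≥ 1 and 0 ≤ ϑ < 1/K, and let ρ := sup{δ ∈ (0,ν) : (1+ϑ)·|n_f(t)|/t + ϑ < 1/K for all t ∈ (0,δ)}. Suppose (d_k)_{k≥0} is a sequence with d_k ∈ (0,ρ) for all k and d_{k+1} ≤ K·[(1+ϑ)·|n_f(d_k)|/d_k + ϑ]·d_k for all k ≥ 0. Then (d_k) is strictly decreasing and converges to 0. -/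

import Mathlib

/-!
On `(0, ρ)` the map `g t := K·[(1+ϑ)·|n_f(t)|/t + ϑ]·t` satisfies `g t < t`, so the recursion
`d_{k+1} ≤ g d_k` forces `(d_k)` to decrease strictly. Its limit `L` is then `≥ 0`; if `L > 0`, then
`L ∈ (0, ρ) ⊆ (0, ν)`, where `f'` is negative and `g` is continuous, and passing to the limit in the
recursion gives `L ≤ g L < L`.
-/

open Filter Set Topology

-- `sSup ∅ = 0` in `ℝ`, so `0 ≤ t < sSup S` already forces `S` to be nonempty.
lemma Real.exists_mem_lt_of_nonneg_of_lt_sSup {S : Set ℝ} {t : ℝ} (ht : 0 ≤ t)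
    (htS : t < sSup S) : ∃ s ∈ S, t < s := by
  have hS : S.Nonempty := by
    by_contra hS
    rw [Set.not_nonempty_iff_eq_empty.mp hS, Real.sSup_empty] at htS
    linarith
  exact exists_lt_of_lt_csSup hS htS

lemma forall_lt_of_lt_sSup_setOf_forall_Ioo {P : ℝ → Prop} {ν t : ℝ} (ht : 0 < t)
    (htρ : t < sSup {δ ∈ Ioo 0 ν | ∀ s ∈ Ioo 0 δ, P s}) : P t ∧ t < ν := by
  obtain ⟨δ, ⟨hδν, hP⟩, htδ⟩ := Real.exists_mem_lt_of_nonneg_of_lt_sSup ht.le htρ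
  exact ⟨hP t ⟨ht, htδ⟩, htδ.trans hδν.2⟩

lemma mem_Ico_and_neg_of_lt_sSup {f' : ℝ → ℝ} {R t : ℝ} (hmono : StrictMonoOn f' (Ico 0 R))
    (ht : 0 ≤ t) (htν : t < sSup {s ∈ Ico 0 R | f' s < 0}) : t ∈ Ico 0 R ∧ f' t < 0 := by
  obtain ⟨s, ⟨hs, hf's⟩, hts⟩ := Real.exists_mem_lt_of_nonneg_of_lt_sSup ht htν
  have htR : t ∈ Ico 0 R := ⟨ht, hts.trans hs.2⟩
  exact ⟨htR, (hmono htR hs hts).trans hf's⟩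

theorem strictAnti_and_tendsto_zero_of_le_map {g : ℝ → ℝ} {ρ : ℝ} {d : ℕ → ℝ}
    (hd : ∀ k, d k ∈ Ioo 0 ρ) (hg : ∀ t ∈ Ioo 0 ρ, g t < t)
    (hgc : ∀ t ∈ Ioo 0 ρ, ContinuousAt g t) (hrec : ∀ k, d (k + 1) ≤ g (d k)) :
    StrictAnti d ∧ Tendsto d atTop (𝓝 0) := by
  have hanti : StrictAnti d :=
    strictAnti_nat_of_succ_lt fun k => (hrec k).trans_lt (hg _ (hd k))
  refine ⟨hanti, ?_⟩
  have hbdd : BddBelow (range d) := ⟨0, by rintro _ ⟨k, rfl⟩; exact (hd k).1.le⟩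
  obtain ⟨L, hdL⟩ : ∃ L, Tendsto d atTop (𝓝 L) := ⟨_, tendsto_atTop_ciInf hanti.antitone hbdd⟩
  rcases (ge_of_tendsto' hdL fun k => (hd k).1.le).eq_or_lt with hL0 | hLpos
  · rwa [← hL0] at hdL
  have hL : L ∈ Ioo 0 ρ := ⟨hLpos, (hanti.antitone.le_of_tendsto hdL 0).trans_lt (hd 0).2⟩
  have hLg : L ≤ g L :=
    le_of_tendsto_of_tendsto' (hdL.comp (tendsto_add_atTop_nat 1))
      ((hgc L hL).tendsto.comp hdL) hrec
  exact absurd (hg L hL) hLg.not_gt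

theorem statement_8_general
    (R : ℝ) (f f' : ℝ → ℝ)
    (hderiv : ∀ t ∈ Set.Ico (0:ℝ) R, HasDerivWithinAt f (f' t) (Set.Ico (0:ℝ) R) t)
    (hcont : ContinuousOn f' (Set.Ico (0:ℝ) R))
    (hmono : StrictMonoOn f' (Set.Ico (0:ℝ) R))
    (ν : ℝ) (hν : ν = sSup {t ∈ Set.Ico (0:ℝ) R | f' t < 0})
    (K ϑ : ℝ) (hK : 1 ≤ K)
    (ρ : ℝ) (hρ : ρ = sSup {δ ∈ Set.Ioo (0:ℝ) ν | ∀ t ∈ Set.Ioo (0:ℝ) δ,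
        (1 + ϑ) * |t - f t / f' t| / t + ϑ < 1 / K})
    (d : ℕ → ℝ) (hd : ∀ k, d k ∈ Set.Ioo (0:ℝ) ρ)
    (hrec : ∀ k, d (k + 1) ≤
        K * ((1 + ϑ) * |d k - f (d k) / f' (d k)| / d k + ϑ) * d k) :
    StrictAnti d ∧ Filter.Tendsto d Filter.atTop (nhds 0) := by
  have hK0 : 0 < K := one_pos.trans_le hK
  refine strictAnti_and_tendsto_zero_of_le_map
    (g := fun t => K * ((1 + ϑ) * |t - f t / f' t| / t + ϑ) * t) hd (fun t ht => ?_)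
    (fun t ht => ?_) hrec
  · have hq := (forall_lt_of_lt_sSup_setOf_forall_Ioo ht.1 (hρ ▸ ht.2)).1
    have hKq : K * ((1 + ϑ) * |t - f t / f' t| / t + ϑ) < 1 := by
      rwa [← lt_div_iff₀' hK0]
    simpa using mul_lt_mul_of_pos_right hKq ht.1
  · have htν := (forall_lt_of_lt_sSup_setOf_forall_Ioo ht.1 (hρ ▸ ht.2)).2
    obtain ⟨htR, hf't⟩ := mem_Ico_and_neg_of_lt_sSup hmono ht.1.le (hν ▸ htν)
    have hnhds : Ico 0 R ∈ 𝓝 t := Ico_mem_nhds ht.1 htR.2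
    have hf : ContinuousAt f t := (hderiv t htR).continuousWithinAt.continuousAt hnhds
    have hf' : ContinuousAt f' t := (hcont t htR).continuousAt hnhds
    fun_prop (disch := first | exact hf't.ne | exact ht.1.ne')

/-- If `(d_k) ⊆ (0,ρ)` satisfies
`d_{k+1} ≤ K·[(1+ϑ)·|n_f(d_k)|/d_k + ϑ]·d_k`, then `(d_k)` is strictly decreasing
and converges to `0`. -/
theorem statement_8
    (R : ℝ) (hR : 0 < R) (f f' : ℝ → ℝ)
    (hderiv : ∀ t ∈ Set.Ico (0:ℝ) R, HasDerivWithinAt f (f' t) (Set.Ico (0:ℝ) R) t)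
    (hcont : ContinuousOn f' (Set.Ico (0:ℝ) R))
    (h0 : f 0 = 0) (h0' : f' 0 = -1)
    (hmono : StrictMonoOn f' (Set.Ico (0:ℝ) R))
    (ν : ℝ) (hν : ν = sSup {t ∈ Set.Ico (0:ℝ) R | f' t < 0})
    (K ϑ : ℝ) (hK : 1 ≤ K) (hϑ0 : 0 ≤ ϑ) (hϑ : ϑ < 1 / K)
    (ρ : ℝ) (hρ : ρ = sSup {δ ∈ Set.Ioo (0:ℝ) ν | ∀ t ∈ Set.Ioo (0:ℝ) δ,
        (1 + ϑ) * |t - f t / f' t| / t + ϑ < 1 / K})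
    (d : ℕ → ℝ) (hd : ∀ k, d k ∈ Set.Ioo (0:ℝ) ρ)
    (hrec : ∀ k, d (k + 1) ≤
        K * ((1 + ϑ) * |d k - f (d k) / f' (d k)| / d k + ϑ) * d k) :
    StrictAnti d ∧ Filter.Tendsto d Filter.atTop (nhds 0) :=
  statement_8_general R f f' hderiv hcont hmono ν hν K ϑ hK ρ hρ d hd hrec
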